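/- arXiv:1808.09181 — 4 statements merged into one kernel-verified Lean document; each statement's English description precedes it below -/
import Mathlib

section
/- Let $(a_k)_{0\le k\le n}$, $(\zeta_k)_{0\le k\le n}$, $(\xi_k)_{0\le k\le n}$ be adapted processes on a filtered probability space $(\Omega,\mathcal G,(\mathcal G_k)_{0\le k\le n},\mathbb P)$ such that (i) $a_0=0$ and $a_k\ge 0$ for all $k$; (ii) $\mathbb E[\xi_{k+1}\mid \mathcal G_k]=0$ for all $0\le k\le n-1$; (iii) $a_{k+1}\le q a_k+\zeta_k+\xi_{k+1}$ for all $0\le k\le n-1$ with some $q>1$; (iv) $\sup_{0\le k\le n}\mathbb E[|\zeta_k|]\le \varepsilon$. Then for any stopping time $\tau\le n$, $\mathbb E[a_\tau]\le \varepsilon q^n/(q-1)$. -/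
/-!
Write `v m = a (τ ∧ m)`. Then `v (m + 1) - v m = 1_{m < τ} (a (m + 1) - a m)` with
`{m < τ} ∈ 𝒢 m`, so the recursion and `E[ξ (m + 1) | 𝒢 m] = 0` give
`E v (m + 1) ≤ E v m + (q - 1) E[1_{m < τ} a m] + ε ≤ q E v m + ε`, the last step because
`a m = v m` on `{m < τ}` and `v m ≥ 0`. As `v 0 = 0`, iterating yields
`E a τ = E v n ≤ ε (q ^ n - 1) / (q - 1)`.
-/

open MeasureTheory ProbabilityTheory

theorem geom_sum_le_pow_div_sub_one {q : ℝ} (hq : 1 < q) (n : ℕ) :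
    ∑ i ∈ Finset.range n, q ^ i ≤ q ^ n / (q - 1) := by
  rw [geom_sum_eq hq.ne' n]
  gcongr
  linarith

theorem le_mul_geom_sum_of_le_mul_add {x : ℕ → ℝ} {q c : ℝ} {n : ℕ} (hq : 0 ≤ q) (h0 : x 0 ≤ 0)
    (hstep : ∀ m < n, x (m + 1) ≤ q * x m + c) :
    ∀ m ≤ n, x m ≤ c * ∑ i ∈ Finset.range m, q ^ i := by
  intro m
  induction m with
  | zero => simpa using h0
  | succ m ih =>
    intro hm
    calc x (m + 1) ≤ q * x m + c := hstep m hm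
      _ ≤ q * (c * ∑ i ∈ Finset.range m, q ^ i) + c := by gcongr; exact ih (by omega)
      _ = c * ∑ i ∈ Finset.range (m + 1), q ^ i := by rw [geom_sum_succ]; ring

theorem setIntegral_eq_zero_of_condExp_ae_eq_zero {Ω : Type*} {m m0 : MeasurableSpace Ω}
    {μ : Measure Ω} {f : Ω → ℝ} {s : Set Ω} (hm : m ≤ m0) [SigmaFinite (μ.trim hm)]
    (hf : Integrable f μ) (hcond : μ[f | m] =ᵐ[μ] 0) (hs : MeasurableSet[m] s) :
    ∫ x in s, f x ∂μ = 0 := by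
  rw [← setIntegral_condExp hm hf hs, integral_congr_ae (ae_restrict_of_ae hcond)]
  simp

theorem setIntegral_le_mul_setIntegral_add_integral_abs {Ω : Type*} {m m0 : MeasurableSpace Ω}
    {μ : Measure Ω} {f g z x : Ω → ℝ} {q : ℝ} {s : Set Ω} (hm : m ≤ m0) [SigmaFinite (μ.trim hm)]
    (hf : Integrable f μ) (hg : Integrable g μ) (hz : Integrable z μ) (hx : Integrable x μ)
    (hle : ∀ᵐ ω ∂μ, f ω ≤ q * g ω + z ω + x ω) (hcond : μ[x | m] =ᵐ[μ] 0)
    (hs : MeasurableSet[m] s) :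
    ∫ ω in s, f ω ∂μ ≤ q * ∫ ω in s, g ω ∂μ + ∫ ω, |z ω| ∂μ := by
  have hz_abs : ∫ ω in s, z ω ∂μ ≤ ∫ ω, |z ω| ∂μ :=
    calc ∫ ω in s, z ω ∂μ ≤ ∫ ω in s, |z ω| ∂μ :=
          (le_abs_self _).trans abs_integral_le_integral_abs
      _ ≤ ∫ ω, |z ω| ∂μ := setIntegral_le_integral hz.abs (.of_forall fun _ => abs_nonneg _)
  calc ∫ ω in s, f ω ∂μ ≤ ∫ ω in s, (q * g ω + z ω + x ω) ∂μ :=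
        integral_mono_ae hf.integrableOn (((hg.const_mul q).add hz).add hx).integrableOn
          (ae_restrict_of_ae hle)
    _ = q * ∫ ω in s, g ω ∂μ + ∫ ω in s, z ω ∂μ + ∫ ω in s, x ω ∂μ := by
        rw [integral_add _ hx.integrableOn, integral_add _ hz.integrableOn, integral_const_mul]
        · exact (hg.const_mul q).integrableOn
        · exact ((hg.const_mul q).add hz).integrableOn
    _ ≤ q * ∫ ω in s, g ω ∂μ + ∫ ω, |z ω| ∂μ := by
        rw [setIntegral_eq_zero_of_condExp_ae_eq_zero hm hx hcond hs]
        linarith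

section StoppedProcess

variable {Ω E : Type*} {m0 : MeasurableSpace Ω} {μ : Measure Ω} {𝒢 : Filtration ℕ m0}
  {τ : Ω → WithTop ℕ}

theorem stoppedProcess_add_one [AddCommGroup E] (u : ℕ → Ω → E) (m : ℕ) :
    stoppedProcess u τ (m + 1) =
      stoppedProcess u τ m + {ω | WithTop.some m < τ ω}.indicator (u (m + 1) - u m) := by
  ext ω
  by_cases h : WithTop.some m < τ ω
  · have h' : WithTop.some (m + 1) ≤ τ ω := by
      cases hτω : τ ω with
      | top => simp
      | coe t => rw [hτω] at h; exact WithTop.coe_le_coe.2 (WithTop.coe_lt_coe.1 h)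
    rw [Pi.add_apply, stoppedProcess_eq_of_le h', stoppedProcess_eq_of_le h.le,
      Set.indicator_of_mem (show ω ∈ {ω | WithTop.some m < τ ω} from h), Pi.sub_apply,
      add_sub_cancel]
  · rw [not_lt] at h
    have h' : τ ω ≤ WithTop.some (m + 1) := h.trans (WithTop.coe_le_coe.2 m.le_succ)
    rw [Pi.add_apply, stoppedProcess_eq_of_ge h', stoppedProcess_eq_of_ge h,
      Set.indicator_of_notMem (show ω ∉ {ω | WithTop.some m < τ ω} from h.not_gt), add_zero]

theorem integrable_stoppedProcess_of_le [NormedAddCommGroup E] (hτ : IsStoppingTime 𝒢 τ)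
    {u : ℕ → Ω → E} {n : ℕ} (hu : ∀ k ≤ n, Integrable (u k) μ) :
    ∀ m ≤ n, Integrable (stoppedProcess u τ m) μ := by
  intro m
  induction m with
  | zero =>
    intro h0
    have : stoppedProcess u τ 0 = u 0 := funext fun ω => stoppedProcess_eq_of_le (by simp)
    exact this ▸ hu 0 h0
  | succ m ih =>
    intro hm
    rw [stoppedProcess_add_one]
    exact (ih (by omega)).add <|
      ((hu _ hm).sub (hu m (by omega))).indicator (𝒢.le m _ (hτ.measurableSet_gt m))

theorem ae_nonneg_stoppedProcess {u : ℕ → Ω → ℝ} {n : ℕ} (hu : ∀ k ≤ n, 0 ≤ᵐ[μ] u k)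
    {m : ℕ} (hm : m ≤ n) : 0 ≤ᵐ[μ] stoppedProcess u τ m := by
  filter_upwards [(Set.finite_Iic n).eventually_all.2 hu] with ω hω
  -- `stoppedProcess u τ m ω` is `u k ω` for `k = (min m (τ ω)).untopA ≤ m`
  exact hω _ ((WithTop.untopA_le (min_le_left _ _)).trans hm)

theorem integral_stoppedProcess_add_one [NormedAddCommGroup E] [NormedSpace ℝ E]
    (hτ : IsStoppingTime 𝒢 τ) {u : ℕ → Ω → E} {m : ℕ}
    (hv : Integrable (stoppedProcess u τ m) μ) (hu : Integrable (u m) μ)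
    (hu' : Integrable (u (m + 1)) μ) :
    ∫ ω, stoppedProcess u τ (m + 1) ω ∂μ =
      ∫ ω, stoppedProcess u τ m ω ∂μ +
        ∫ ω in {ω | WithTop.some m < τ ω}, (u (m + 1) ω - u m ω) ∂μ := by
  have hS := 𝒢.le m _ (hτ.measurableSet_gt m)
  simp only [stoppedProcess_add_one, Pi.add_apply]
  rw [integral_add hv ((hu'.sub hu).indicator hS), integral_indicator hS]
  rfl

theorem integral_stoppedProcess_add_one_le [SigmaFiniteFiltration μ 𝒢] (hτ : IsStoppingTime 𝒢 τ)
    {a ζ ξ : ℕ → Ω → ℝ} {q : ℝ} {m : ℕ} (hq : 1 ≤ q)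
    (hv : Integrable (stoppedProcess a τ m) μ) (hv_nonneg : 0 ≤ᵐ[μ] stoppedProcess a τ m)
    (ha : Integrable (a m) μ) (ha' : Integrable (a (m + 1)) μ)
    (hζ : Integrable (ζ m) μ) (hξ : Integrable (ξ (m + 1)) μ)
    (hcond : μ[ξ (m + 1) | 𝒢 m] =ᵐ[μ] 0)
    (hrec : ∀ᵐ ω ∂μ, a (m + 1) ω ≤ q * a m ω + ζ m ω + ξ (m + 1) ω) :
    ∫ ω, stoppedProcess a τ (m + 1) ω ∂μ ≤
      q * ∫ ω, stoppedProcess a τ m ω ∂μ + ∫ ω, |ζ m ω| ∂μ := by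
  have hS := hτ.measurableSet_gt m
  have h_alive : ∫ ω in {ω | WithTop.some m < τ ω}, a m ω ∂μ ≤ ∫ ω, stoppedProcess a τ m ω ∂μ :=
    calc _ = ∫ ω in {ω | WithTop.some m < τ ω}, stoppedProcess a τ m ω ∂μ :=
          setIntegral_congr_fun (𝒢.le m _ hS) fun ω hω => (stoppedProcess_eq_of_le hω.le).symm
      _ ≤ _ := setIntegral_le_integral hv hv_nonneg
  have h_rec := setIntegral_le_mul_setIntegral_add_integral_abs (𝒢.le m) ha' ha hζ hξ hrec hcond hS
  rw [integral_stoppedProcess_add_one hτ hv ha ha', integral_sub ha'.integrableOn ha.integrableOn]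
  nlinarith [mul_le_mul_of_nonneg_left h_alive (sub_nonneg.2 hq)]

end StoppedProcess

theorem stopped_error_bound_general {Ω : Type*} {m : MeasurableSpace Ω} {μ : Measure Ω}
    [IsProbabilityMeasure μ] (n : ℕ) (𝒢 : Filtration ℕ m)
    (a ζ ξ : ℕ → Ω → ℝ)
    (ha_int : ∀ k ≤ n, Integrable (a k) μ)
    (hζ_int : ∀ k ≤ n, Integrable (ζ k) μ)
    (hξ_int : ∀ k ≤ n, Integrable (ξ k) μ)
    (h0 : ∀ᵐ ω ∂μ, a 0 ω = 0)
    (hpos : ∀ k ≤ n, ∀ᵐ ω ∂μ, 0 ≤ a k ω)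
    (hcond : ∀ k < n, μ[ξ (k + 1) | 𝒢 k] =ᵐ[μ] 0)
    (q : ℝ) (hq : 1 < q)
    (hrec : ∀ k < n, ∀ᵐ ω ∂μ, a (k + 1) ω ≤ q * a k ω + ζ k ω + ξ (k + 1) ω)
    (ε : ℝ)
    (hζε : ∀ k ≤ n, ∫ ω, |ζ k ω| ∂μ ≤ ε)
    (τ : Ω → ℕ) (hτ : IsStoppingTime 𝒢 (fun ω => (τ ω : WithTop ℕ))) (hτn : ∀ ω, τ ω ≤ n) :
    ∫ ω, a (τ ω) ω ∂μ ≤ ε * q ^ n / (q - 1) := by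
  set v := stoppedProcess a fun ω => (τ ω : WithTop ℕ)
  have hv_int := integrable_stoppedProcess_of_le hτ ha_int
  have h_start : ∫ ω, v 0 ω ∂μ ≤ 0 := by
    rw [integral_eq_zero_of_ae]
    filter_upwards [h0] with ω hω
    simpa [v, stoppedProcess_eq_of_le] using hω
  have h_step (k : ℕ) (hk : k < n) : ∫ ω, v (k + 1) ω ∂μ ≤ q * ∫ ω, v k ω ∂μ + ε :=
    (integral_stoppedProcess_add_one_le hτ hq.le (hv_int k hk.le)
      (ae_nonneg_stoppedProcess hpos hk.le) (ha_int k hk.le) (ha_int _ hk) (hζ_int k hk.le)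
      (hξ_int _ hk) (hcond k hk) (hrec k hk)).trans (by gcongr; exact hζε k hk.le)
  have hε : 0 ≤ ε := (integral_nonneg fun ω => abs_nonneg _).trans (hζε 0 n.zero_le)
  calc ∫ ω, a (τ ω) ω ∂μ = ∫ ω, v n ω ∂μ := by
        congr with ω
        simp [v, stoppedProcess, hτn ω]
        rfl
    _ ≤ ε * ∑ i ∈ Finset.range n, q ^ i :=
        le_mul_geom_sum_of_le_mul_add (x := fun k => ∫ ω, v k ω ∂μ) (by linarith) h_start h_step
          n le_rfl
    _ ≤ ε * (q ^ n / (q - 1)) := by gcongr; exact geom_sum_le_pow_div_sub_one hq n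
    _ = ε * q ^ n / (q - 1) := (mul_div_assoc _ _ _).symm

theorem stopped_error_bound {Ω : Type*} {m : MeasurableSpace Ω} {μ : Measure Ω}
    [IsProbabilityMeasure μ] (n : ℕ) (𝒢 : Filtration ℕ m)
    (a ζ ξ : ℕ → Ω → ℝ)
    (ha : Adapted 𝒢 a) (hζ : Adapted 𝒢 ζ) (hξ : Adapted 𝒢 ξ)
    (ha_int : ∀ k ≤ n, Integrable (a k) μ)
    (hζ_int : ∀ k ≤ n, Integrable (ζ k) μ)
    (hξ_int : ∀ k ≤ n, Integrable (ξ k) μ)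
    (h0 : ∀ᵐ ω ∂μ, a 0 ω = 0)
    (hpos : ∀ k ≤ n, ∀ᵐ ω ∂μ, 0 ≤ a k ω)
    (hcond : ∀ k < n, μ[ξ (k + 1) | 𝒢 k] =ᵐ[μ] 0)
    (q : ℝ) (hq : 1 < q)
    (hrec : ∀ k < n, ∀ᵐ ω ∂μ, a (k + 1) ω ≤ q * a k ω + ζ k ω + ξ (k + 1) ω)
    (ε : ℝ) (hε : 0 < ε)
    (hζε : ∀ k ≤ n, ∫ ω, |ζ k ω| ∂μ ≤ ε)
    (τ : Ω → ℕ) (hτ : IsStoppingTime 𝒢 (fun ω => (τ ω : WithTop ℕ))) (hτn : ∀ ω, τ ω ≤ n) :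
    ∫ ω, a (τ ω) ω ∂μ ≤ ε * q ^ n / (q - 1) :=
  stopped_error_bound_general n 𝒢 a ζ ξ ha_int hζ_int hξ_int h0 hpos hcond q hq hrec ε hζε τ hτ hτn
end

section
/- Let $d\ge 1$, let $\gamma_{ij}=\gamma_{ji}\ge 0$ for $i\ne j$, and let $x=(x_1,\dots,x_d)$, $y=(y_1,\dots,y_d)$ both lie in the Weyl chamber $\Delta_d=\{z\in\mathbb R^d: z_1<z_2<\dots<z_d\}$. Then $\sum_{i=1}^d\sum_{j\ne i} (x_i-y_i)\Big(\frac{\gamma_{ij}}{x_i-x_j}-\frac{\gamma_{ij}}{y_i-y_j}\Big) \le 0$. -/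
/-!
Pair the `(i, j)` and `(j, i)` terms. Since `γ` is symmetric, their sum is
`((x i - x j) - (y i - y j)) * (γ i j / (x i - x j) - γ i j / (y i - y j))`, and this is
nonpositive because `x i - x j` and `y i - y j` have the same sign on the Weyl chamber while
`u ↦ γ i j / u` is antitone on each half-line.
-/

open Finset

section OffDiagonal

variable {ι M : Type*} [Fintype ι] [DecidableEq ι]

theorem Finset.sum_sum_erase_swap [AddCommMonoid M] (f : ι → ι → M) :
    ∑ i, ∑ j ∈ univ.erase i, f j i = ∑ i, ∑ j ∈ univ.erase i, f i j :=
  sum_comm' fun i j => by simp [and_comm, ne_comm]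

theorem Finset.sum_sum_erase_nonpos_of_add_swap_nonpos
    [AddCommMonoid M] [LinearOrder M] [IsOrderedAddMonoid M] {f : ι → ι → M}
    (h : ∀ i j, i ≠ j → f i j + f j i ≤ 0) :
    ∑ i, ∑ j ∈ univ.erase i, f i j ≤ 0 := by
  rw [← add_self_nonpos_iff]
  calc ∑ i, ∑ j ∈ univ.erase i, f i j + ∑ i, ∑ j ∈ univ.erase i, f i j
      = ∑ i, ∑ j ∈ univ.erase i, (f i j + f j i) := by
        simp only [sum_add_distrib, sum_sum_erase_swap f]
    _ ≤ 0 := sum_nonpos fun i _ => sum_nonpos fun j hj => h i j (ne_of_mem_erase hj).symm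

end OffDiagonal

theorem StrictMono.sub_mul_sub_pos {α R : Type*} [LinearOrder α] [Ring R] [LinearOrder R]
    [IsStrictOrderedRing R] {x y : α → R} (hx : StrictMono x) (hy : StrictMono y) {i j : α}
    (hij : i ≠ j) : 0 < (x i - x j) * (y i - y j) := by
  rcases hij.lt_or_gt with h | h
  · exact mul_pos_of_neg_of_neg (sub_neg.2 (hx h)) (sub_neg.2 (hy h))
  · exact mul_pos (sub_pos.2 (hx h)) (sub_pos.2 (hy h))

theorem sub_mul_div_sub_div_nonpos {K : Type*} [Field K] [LinearOrder K] [IsStrictOrderedRing K]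
    {a b c : K} (hab : 0 < a * b) (hc : 0 ≤ c) : (a - b) * (c / a - c / b) ≤ 0 := by
  have ha : a ≠ 0 := left_ne_zero_of_mul hab.ne'
  have hb : b ≠ 0 := right_ne_zero_of_mul hab.ne'
  have h : (a - b) * (c / a - c / b) = -(c * (a - b) ^ 2 / (a * b)) := by
    field_simp
    ring
  rw [h, neg_nonpos]
  exact div_nonneg (by positivity) hab.le

theorem weyl_chamber_interaction_nonpos_general (d : ℕ)
    (γ : Fin d → Fin d → ℝ) (hsym : ∀ i j, γ i j = γ j i)
    (hnn : ∀ i j, i ≠ j → 0 ≤ γ i j)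
    (x y : Fin d → ℝ) (hx : StrictMono x) (hy : StrictMono y) :
    ∑ i, ∑ j ∈ Finset.univ.erase i,
      (x i - y i) * (γ i j / (x i - x j) - γ i j / (y i - y j)) ≤ 0 := by
  refine sum_sum_erase_nonpos_of_add_swap_nonpos fun i j hij => ?_
  have hpair : (x i - y i) * (γ i j / (x i - x j) - γ i j / (y i - y j))
        + (x j - y j) * (γ j i / (x j - x i) - γ j i / (y j - y i))
      = ((x i - x j) - (y i - y j)) * (γ i j / (x i - x j) - γ i j / (y i - y j)) := by
    rw [hsym j i, ← neg_sub (x i) (x j), ← neg_sub (y i) (y j), div_neg, div_neg]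
    ring
  rw [hpair]
  exact sub_mul_div_sub_div_nonpos (hx.sub_mul_sub_pos hy hij) (hnn i j hij)

theorem weyl_chamber_interaction_nonpos (d : ℕ) (hd : 1 ≤ d)
    (γ : Fin d → Fin d → ℝ) (hsym : ∀ i j, γ i j = γ j i)
    (hnn : ∀ i j, i ≠ j → 0 ≤ γ i j)
    (x y : Fin d → ℝ) (hx : StrictMono x) (hy : StrictMono y) :
    ∑ i, ∑ j ∈ Finset.univ.erase i,
      (x i - y i) * (γ i j / (x i - x j) - γ i j / (y i - y j)) ≤ 0 :=
  weyl_chamber_interaction_nonpos_general d γ hsym hnn x y hx hy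
end

section
/- Let $d\ge 1$, $h>0$, $\gamma_{ij}=\gamma_{ji}\ge 0$, and suppose $X, X^{(n)}\in\Delta_d$, $e_i = X_i - X_i^{(n)}$, and for each $i$ the identity $e_i = f_i + \sum_{j\ne i}\Big(\frac{\gamma_{ij}}{X_i-X_j}-\frac{\gamma_{ij}}{X^{(n)}_i-X^{(n)}_j}\Big) h$ holds for some reals $f_i$. Then $\sum_{i=1}^d e_i^2 \le \sum_{i=1}^d f_i^2$. -/
/-!
Multiplying the identity for `e i` by `e i` and summing gives
`∑ fᵢ² ≥ ∑ eᵢ² - 2h ∑ᵢ eᵢ Sᵢ`, where `Sᵢ` is the interaction sum. Symmetrizing over pairs,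
`∑ᵢ eᵢ Sᵢ = ½ ∑_{i ≠ j} (Xᵢⱼ - Xⁿᵢⱼ)(γᵢⱼ / Xᵢⱼ - γᵢⱼ / Xⁿᵢⱼ)`, and each term is `≤ 0`
because `Xᵢⱼ` and `Xⁿᵢⱼ` have the same sign (both configurations are ordered) and `x ↦ γ / x`
is decreasing on each half-line.
-/

open Finset

lemma sub_mul_div_sub_div_nonpos_s4 {γ a b : ℝ} (hγ : 0 ≤ γ) (hab : 0 < a * b) :
    (a - b) * (γ / a - γ / b) ≤ 0 := by
  have ha : a ≠ 0 := by rintro rfl; simp at hab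
  have hb : b ≠ 0 := by rintro rfl; simp at hab
  have key : (a - b) * (γ / a - γ / b) = -(γ * (a - b) ^ 2 / (a * b)) := by
    field_simp; ring
  rw [key, neg_nonpos]
  positivity

lemma StrictMono.sub_mul_sub_pos_s4 {ι : Type*} [LinearOrder ι] {X Y : ι → ℝ}
    (hX : StrictMono X) (hY : StrictMono Y) {i j : ι} (hij : i ≠ j) :
    0 < (X i - X j) * (Y i - Y j) := by
  rcases hij.lt_or_gt with hlt | hlt
  · exact mul_pos_of_neg_of_neg (sub_neg.2 (hX hlt)) (sub_neg.2 (hY hlt))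
  · exact mul_pos (sub_pos.2 (hX hlt)) (sub_pos.2 (hY hlt))

lemma sum_sum_erase_nonpos_of_add_swap_nonpos {ι : Type*} [Fintype ι] [DecidableEq ι]
    (g : ι → ι → ℝ) (hg : ∀ i j, i ≠ j → g i j + g j i ≤ 0) :
    ∑ i, ∑ j ∈ univ.erase i, g i j ≤ 0 := by
  set F : ι → ι → ℝ := fun i j => if i = j then 0 else g i j
  have hF : ∑ i, ∑ j ∈ univ.erase i, g i j = ∑ i, ∑ j, F i j := by
    refine sum_congr rfl fun i _ => ?_
    rw [← filter_ne, sum_filter]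
    exact sum_congr rfl fun j _ => by simp only [F, ite_not]
  have hpairs : ∑ i, ∑ j, (F i j + F j i) ≤ 0 := by
    refine sum_nonpos fun i _ => sum_nonpos fun j _ => ?_
    by_cases hij : i = j
    · simp [F, hij]
    · simpa [F, hij, Ne.symm hij] using hg i j hij
  rw [hF]
  have hswap : ∑ i, ∑ j, F j i = ∑ i, ∑ j, F i j := sum_comm
  simp only [sum_add_distrib, hswap] at hpairs
  linarith

lemma sum_sq_le_sum_sq_of_sum_mul_nonpos {ι : Type*} [Fintype ι] {e f S : ι → ℝ} {h : ℝ}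
    (hh : 0 ≤ h) (hef : ∀ i, e i = f i + S i * h) (hS : ∑ i, e i * S i ≤ 0) :
    ∑ i, e i ^ 2 ≤ ∑ i, f i ^ 2 := by
  have hterm : ∀ i, e i ^ 2 - 2 * h * (e i * S i) ≤ f i ^ 2 := fun i => by
    rw [eq_sub_of_add_eq (hef i).symm]
    nlinarith [sq_nonneg (S i * h)]
  calc ∑ i, e i ^ 2
    _ ≤ ∑ i, e i ^ 2 - 2 * h * ∑ i, e i * S i := by
      linarith [mul_nonpos_of_nonneg_of_nonpos (by positivity : 0 ≤ 2 * h) hS]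
    _ = ∑ i, (e i ^ 2 - 2 * h * (e i * S i)) := by rw [sum_sub_distrib, mul_sum]
    _ ≤ ∑ i, f i ^ 2 := sum_le_sum fun i _ => hterm i

theorem implicit_step_error_contraction_general (d : ℕ) (h : ℝ) (hh : 0 < h)
    (γ : Fin d → Fin d → ℝ) (hsym : ∀ i j, γ i j = γ j i)
    (hnn : ∀ i j, i ≠ j → 0 ≤ γ i j)
    (X Xn : Fin d → ℝ) (hX : StrictMono X) (hXn : StrictMono Xn)
    (e f : Fin d → ℝ) (he : ∀ i, e i = X i - Xn i)
    (hid : ∀ i, e i = f i +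
      (∑ j ∈ Finset.univ.erase i, (γ i j / (X i - X j) - γ i j / (Xn i - Xn j))) * h) :
    ∑ i, (e i) ^ 2 ≤ ∑ i, (f i) ^ 2 := by
  refine sum_sq_le_sum_sq_of_sum_mul_nonpos hh.le hid ?_
  simp only [mul_sum]
  refine sum_sum_erase_nonpos_of_add_swap_nonpos _ fun i j hij => ?_
  have hswap : e i * (γ i j / (X i - X j) - γ i j / (Xn i - Xn j)) +
      e j * (γ j i / (X j - X i) - γ j i / (Xn j - Xn i)) =
      ((X i - X j) - (Xn i - Xn j)) * (γ i j / (X i - X j) - γ i j / (Xn i - Xn j)) := by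
    rw [he i, he j, hsym j i, ← neg_sub (X i) (X j), ← neg_sub (Xn i) (Xn j), div_neg, div_neg]
    ring
  rw [hswap]
  exact sub_mul_div_sub_div_nonpos_s4 (hnn i j hij) (hX.sub_mul_sub_pos_s4 hXn hij)

theorem implicit_step_error_contraction (d : ℕ) (hd : 1 ≤ d) (h : ℝ) (hh : 0 < h)
    (γ : Fin d → Fin d → ℝ) (hsym : ∀ i j, γ i j = γ j i)
    (hnn : ∀ i j, i ≠ j → 0 ≤ γ i j)
    (X Xn : Fin d → ℝ) (hX : StrictMono X) (hXn : StrictMono Xn)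
    (e f : Fin d → ℝ) (he : ∀ i, e i = X i - Xn i)
    (hid : ∀ i, e i = f i +
      (∑ j ∈ Finset.univ.erase i, (γ i j / (X i - X j) - γ i j / (Xn i - Xn j))) * h) :
    ∑ i, (e i) ^ 2 ≤ ∑ i, (f i) ^ 2 :=
  implicit_step_error_contraction_general d h hh γ hsym hnn X Xn hX hXn e f he hid
end

section
/- Let $(Y_k)_{0\le k\le n}$ be nonnegative random variables and suppose there are constants $C>0$ such that for every stopping time $\tau$ (with respect to a discrete filtration, taking values in $\{0,\dots,n\}$), $\mathbb E[Y_\tau]\le C$. Then for every $p\in(0,1)$, $\mathbb E\big[\max_{0\le k\le n} Y_k^{\,p}\big] \le \frac{C^p}{1-p}$. -/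
/-!
Let `M = max_{k ≤ n} Y_k` and let `τ ≤ n` be the first time `Y` exceeds `t`. On `{M > t}` we
have `Y_τ > t`, so Markov's inequality and `𝔼[Y_τ] ≤ C` give the weak-type bound
`P(M > t) ≤ C / t`. In the layer-cake formula `𝔼[M^p] = p ∫₀^∞ P(M > t) t^(p-1) dt`, bounding
the probability by `1` on `(0, C]` and by `C / t` on `(C, ∞)` gives
`p (C^p / p + C^p / (1 - p)) = C^p / (1 - p)`.
-/

open MeasureTheory Set

lemma lintegral_Ioc_zero_ofReal_rpow_sub_one {p C : ℝ} (hp : 0 < p) (hC : 0 ≤ C) :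
    ∫⁻ t in Ioc 0 C, ENNReal.ofReal (t ^ (p - 1)) = ENNReal.ofReal (C ^ p / p) := by
  have hint : IntegrableOn (fun t : ℝ => t ^ (p - 1)) (Ioc 0 C) := by
    rw [← intervalIntegrable_iff_integrableOn_Ioc_of_le hC]
    exact intervalIntegral.intervalIntegrable_rpow' (by linarith)
  have hnn : 0 ≤ᵐ[volume.restrict (Ioc 0 C)] fun t : ℝ => t ^ (p - 1) := by
    filter_upwards [ae_restrict_mem measurableSet_Ioc] with t ht
    exact Real.rpow_nonneg ht.1.le _
  rw [← ofReal_integral_eq_lintegral_ofReal hint hnn, ← intervalIntegral.integral_of_le hC,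
    integral_rpow (Or.inl (by linarith)), sub_add_cancel, Real.zero_rpow hp.ne', sub_zero]

lemma lintegral_Ioi_ofReal_mul_rpow_sub_two {p C : ℝ} (hp : p < 1) (hC : 0 < C) :
    ∫⁻ t in Ioi C, ENNReal.ofReal (C * t ^ (p - 2)) = ENNReal.ofReal (C ^ p / (1 - p)) := by
  have hint : IntegrableOn (fun t : ℝ => C * t ^ (p - 2)) (Ioi C) :=
    (integrableOn_Ioi_rpow_of_lt (by linarith) hC).const_mul C
  have hnn : 0 ≤ᵐ[volume.restrict (Ioi C)] fun t : ℝ => C * t ^ (p - 2) := by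
    filter_upwards [ae_restrict_mem measurableSet_Ioi] with t ht
    exact mul_nonneg hC.le (Real.rpow_nonneg (hC.trans ht).le _)
  rw [← ofReal_integral_eq_lintegral_ofReal hint hnn, integral_const_mul,
    integral_Ioi_rpow_of_lt (by linarith) hC, show p - 2 + 1 = p - 1 by ring,
    Real.rpow_sub_one hC.ne']
  have : 1 - p ≠ 0 := by linarith
  have : p - 1 ≠ 0 := by linarith
  congr 1
  field_simp
  ring

theorem integral_rpow_le_of_mul_meas_lt_le {Ω : Type*} {m : MeasurableSpace Ω} {μ : Measure Ω}
    [IsProbabilityMeasure μ] {f : Ω → ℝ} (hf_nn : 0 ≤ᵐ[μ] f) (hf : AEMeasurable f μ)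
    {C : ℝ} (hC : 0 < C) (htail : ∀ t > 0, t * μ.real {ω | t < f ω} ≤ C)
    {p : ℝ} (hp0 : 0 < p) (hp1 : p < 1) :
    ∫ ω, f ω ^ p ∂μ ≤ C ^ p / (1 - p) := by
  set g : ℝ → ENNReal := fun t => μ {ω | t < f ω} * ENNReal.ofReal (t ^ (p - 1))
  have hsmall : ∫⁻ t in Ioc 0 C, g t ≤ ENNReal.ofReal (C ^ p / p) :=
    (lintegral_mono fun t => mul_le_of_le_one_left' prob_le_one).trans_eq
      (lintegral_Ioc_zero_ofReal_rpow_sub_one hp0 hC.le)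
  have hlarge : ∫⁻ t in Ioi C, g t ≤ ENNReal.ofReal (C ^ p / (1 - p)) := by
    refine (setLIntegral_mono' measurableSet_Ioi fun t ht => ?_).trans_eq
      (lintegral_Ioi_ofReal_mul_rpow_sub_two hp1 hC)
    have ht : 0 < t := hC.trans ht
    have hweak : μ {ω | t < f ω} ≤ ENNReal.ofReal (C / t) := by
      rw [← ofReal_measureReal]
      exact ENNReal.ofReal_le_ofReal ((le_div_iff₀ ht).2 (by linarith [htail t ht]))
    calc g t ≤ ENNReal.ofReal (C / t) * ENNReal.ofReal (t ^ (p - 1)) := by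
          simp only [g]
          gcongr
      _ = ENNReal.ofReal (C * t ^ (p - 2)) := by
        rw [← ENNReal.ofReal_mul (by positivity), show p - 2 = p - 1 - 1 by ring,
          Real.rpow_sub_one ht.ne' (p - 1), div_mul_eq_mul_div, mul_div_assoc]
  have hlintegral : ∫⁻ ω, ENNReal.ofReal (f ω ^ p) ∂μ ≤ ENNReal.ofReal (C ^ p / (1 - p)) := by
    rw [lintegral_rpow_eq_lintegral_meas_lt_mul μ hf_nn hf hp0, ← Ioc_union_Ioi_eq_Ioi hC.le,
      lintegral_union measurableSet_Ioi (Ioc_disjoint_Ioi le_rfl)]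
    calc _ ≤ ENNReal.ofReal p *
          (ENNReal.ofReal (C ^ p / p) + ENNReal.ofReal (C ^ p / (1 - p))) := by
          gcongr
      _ = ENNReal.ofReal (C ^ p / (1 - p)) := by
        have : 1 - p ≠ 0 := by linarith
        rw [← ENNReal.ofReal_add (by positivity) (by positivity), ← ENNReal.ofReal_mul hp0.le]
        congr 1
        field_simp
        ring
  rw [integral_eq_lintegral_of_nonneg_ae (hf_nn.mono fun ω hω => Real.rpow_nonneg hω p)
    (hf.pow_const p).aestronglyMeasurable]
  exact ENNReal.toReal_le_of_le_ofReal (by positivity) hlintegral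

theorem mul_meas_lt_iSup_le_integral_hittingBtwn {Ω : Type*} {m : MeasurableSpace Ω}
    {μ : Measure Ω} [IsFiniteMeasure μ] {𝒢 : Filtration ℕ m} {Y : ℕ → Ω → ℝ} {n : ℕ}
    (hadapt : Adapted 𝒢 Y) (hnn : ∀ k ω, 0 ≤ Y k ω) (hint : ∀ k ≤ n, Integrable (Y k) μ)
    {t : ℝ} (ht : 0 ≤ t) :
    t * μ.real {ω | t < ⨆ k : Fin (n + 1), Y k ω} ≤
      ∫ ω, Y (hittingBtwn Y (Ioi t) 0 n ω) ω ∂μ := by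
  set τ := hittingBtwn Y (Ioi t) 0 n
  have hτ : IsStoppingTime 𝒢 (fun ω => (τ ω : WithTop ℕ)) :=
    hadapt.isStoppingTime_hittingBtwn measurableSet_Ioi
  have hτ_int : Integrable (fun ω => Y (τ ω) ω) μ := by
    have h := integrable_stoppedValue ℕ hτ (u := fun k => Y (min k n))
      (fun k => hint _ (min_le_right k n)) (N := n)
      (fun ω => WithTop.coe_le_coe.2 (hittingBtwn_le ω))
    refine h.congr (ae_of_all _ fun ω => ?_)
    change Y (min (τ ω) n) ω = Y (τ ω) ω
    rw [min_eq_left (hittingBtwn_le ω)]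
  have hsub : {ω | t < ⨆ k : Fin (n + 1), Y k ω} ⊆ {ω | t ≤ Y (τ ω) ω} := fun ω hω => by
    obtain ⟨k, hk⟩ := (lt_ciSup_iff (finite_range fun k : Fin (n + 1) => Y k ω).bddAbove).1 hω
    have hτ_mem : Y (τ ω) ω ∈ Ioi t :=
      hittingBtwn_mem_set ⟨k, ⟨Nat.zero_le _, Nat.lt_succ_iff.1 k.isLt⟩, hk⟩
    exact le_of_lt (mem_Ioi.1 hτ_mem)
  calc t * μ.real {ω | t < ⨆ k : Fin (n + 1), Y k ω} ≤ t * μ.real {ω | t ≤ Y (τ ω) ω} := by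
        gcongr
        exact measure_ne_top μ _
    _ ≤ ∫ ω, Y (τ ω) ω ∂μ :=
        mul_meas_ge_le_integral_of_nonneg (ae_of_all _ fun ω => hnn _ ω) hτ_int t

theorem lenglart_domination_discrete {Ω : Type*} {m : MeasurableSpace Ω} {μ : Measure Ω}
    [IsProbabilityMeasure μ] (n : ℕ) (𝒢 : Filtration ℕ m)
    (Y : ℕ → Ω → ℝ) (hadapt : Adapted 𝒢 Y)
    (hnn : ∀ k ω, 0 ≤ Y k ω) (hint : ∀ k ≤ n, Integrable (Y k) μ)
    (C : ℝ) (hC : 0 < C)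
    (hbound : ∀ τ : Ω → ℕ, IsStoppingTime 𝒢 (fun ω => (τ ω : WithTop ℕ)) → (∀ ω, τ ω ≤ n) →
      ∫ ω, Y (τ ω) ω ∂μ ≤ C)
    (p : ℝ) (hp0 : 0 < p) (hp1 : p < 1) :
    ∫ ω, (⨆ k : Fin (n + 1), Y k ω) ^ p ∂μ ≤ C ^ p / (1 - p) := by
  have hY : ∀ k, Measurable (Y k) := fun k => (hadapt k).mono (𝒢.le k) le_rfl
  have hmax_nn : ∀ ω, 0 ≤ ⨆ k : Fin (n + 1), Y k ω := fun ω =>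
    (hnn 0 ω).trans (le_ciSup (finite_range fun k : Fin (n + 1) => Y k ω).bddAbove 0)
  refine integral_rpow_le_of_mul_meas_lt_le (ae_of_all _ hmax_nn)
    (Measurable.iSup fun k : Fin (n + 1) => hY k).aemeasurable hC (fun t ht => ?_) hp0 hp1
  exact (mul_meas_lt_iSup_le_integral_hittingBtwn hadapt hnn hint ht.le).trans
    (hbound _ (hadapt.isStoppingTime_hittingBtwn measurableSet_Ioi) fun ω => hittingBtwn_le ω)
end
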